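/- arXiv:1811.08416 — 4 statements merged into one kernel-verified Lean document; each statement's English description precedes it below -/
import Mathlib

section
/- For every integer l ≥ 1 there exists a constant C > 0 such that for every integer n with |n| ≥ 1, the sum over all tuples (q₁,…,q_l) ∈ ℤ^l with |q_j| ≥ 1 for every j and |n − q₁ − ⋯ − q_l| ≥ 1 of the product (1/|q₁|)(1/q₂²)⋯(1/q_l²)·(1/(n − q₁ − ⋯ − q_l)²) is at most C/|n|. -/
open Real

noncomputable def cw (m : ℤ) : ℝ := 1 / (max 1 |(m:ℝ)|) ^ 2

lemma one_le_maxabs (m : ℤ) : (1:ℝ) ≤ max 1 |(m:ℝ)| := le_max_left _ _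

lemma cw_pos (m : ℤ) : 0 < cw m := by
  have := one_le_maxabs m
  unfold cw; positivity

lemma cw_nonneg (m : ℤ) : 0 ≤ cw m := (cw_pos m).le

lemma cw_eq (m : ℤ) (h : 1 ≤ |m|) : cw m = 1 / (m:ℝ) ^ 2 := by
  have h1 : (1:ℝ) ≤ |(m:ℝ)| := by exact_mod_cast (by push_cast [← Int.cast_abs]; exact_mod_cast h : (1:ℝ) ≤ ((|m|:ℤ):ℝ))
  rw [cw, max_eq_right h1, sq_abs]

lemma summable_cw : Summable cw := by
  have h2 : Summable fun m : ℤ => 1 / (m:ℝ) ^ 2 := summable_one_div_int_pow.2 one_lt_two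
  have h0 : Summable fun m : ℤ => if m = 0 then (1:ℝ) else 0 :=
    summable_of_finite_support (by
      apply Set.Finite.subset (Set.finite_singleton (0:ℤ))
      intro x hx
      simp only [Function.mem_support] at hx
      by_contra h
      simp only [Set.mem_singleton_iff] at h
      simp [h] at hx)
  apply Summable.of_nonneg_of_le (fun m => cw_nonneg m) _ (h2.add h0)
  intro m
  by_cases h : m = 0
  · simp [h, cw]
  · have : 1 ≤ |m| := Int.one_le_abs (by exact_mod_cast h)
    rw [cw_eq m this]
    simp [h]

lemma abs_int_one_le (m : ℤ) (h : 1 ≤ |m|) : (1:ℝ) ≤ |(m:ℝ)| := by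
  rw [← Int.cast_abs]; exact_mod_cast h

noncomputable def cu0 (x : ℤ) : ℝ := if 1 ≤ |x| then 1 / |(x:ℝ)| else 0
noncomputable def cu (x : ℤ) : ℝ := if 1 ≤ |x| then 1 / (x:ℝ) ^ 2 else 0

lemma cu0_nonneg (x : ℤ) : 0 ≤ cu0 x := by unfold cu0; positivity
lemma cu_nonneg (x : ℤ) : 0 ≤ cu x := by unfold cu; positivity
lemma cu_le_cw (x : ℤ) : cu x ≤ cw x := by
  unfold cu
  split
  · rw [cw_eq x ‹_›]
  · exact cw_nonneg x

lemma summable_cw_sub (m : ℤ) : Summable fun q : ℤ => cw (m - q) :=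
  (Equiv.subLeft m).summable_iff.2 summable_cw |>.congr (fun q => rfl)

/-- key pointwise convolution inequality -/
lemma cw_conv_pointwise (m q : ℤ) : cw q * cw (m - q) ≤ 4 * cw m * (cw q + cw (m - q)) := by
  set a := max 1 |(q:ℝ)| with ha
  set b := max 1 |((m - q : ℤ):ℝ)| with hb
  set c := max 1 |(m:ℝ)| with hc
  have ha1 : (1:ℝ) ≤ a := one_le_maxabs q
  have hb1 : (1:ℝ) ≤ b := one_le_maxabs (m - q)
  have hc1 : (1:ℝ) ≤ c := one_le_maxabs m
  have hcab : c ≤ a + b := by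
    have h1 : |(m:ℝ)| ≤ a + b := by
      have : (m:ℝ) = (q:ℝ) + ((m - q : ℤ):ℝ) := by push_cast; ring
      rw [this]
      calc |(q:ℝ) + ((m - q : ℤ):ℝ)| ≤ |(q:ℝ)| + |((m - q : ℤ):ℝ)| := abs_add_le _ _
        _ ≤ a + b := add_le_add (le_max_right _ _) (le_max_right _ _)
    exact max_le (by linarith) h1
  show 1 / a ^ 2 * (1 / b ^ 2) ≤ 4 * (1 / c ^ 2) * (1 / a ^ 2 + 1 / b ^ 2)
  rw [div_mul_div_comm, one_mul, div_le_iff₀ (by positivity)]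
  have expand : 4 * (1 / c ^ 2) * (1 / a ^ 2 + 1 / b ^ 2) * (a ^ 2 * b ^ 2)
      = 4 * (b ^ 2 + a ^ 2) / c ^ 2 := by
    field_simp
  rw [expand, le_div_iff₀ (by positivity)]
  nlinarith [sq_nonneg (a - b), sq_nonneg (a + b), mul_pos (lt_of_lt_of_le one_pos ha1) (lt_of_lt_of_le one_pos hb1)]

lemma cw_conv (m : ℤ) :
    Summable (fun q : ℤ => cu q * cw (m - q)) ∧
    ∑' q : ℤ, cu q * cw (m - q) ≤ (8 * ∑' x : ℤ, cw x) * cw m := by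
  have hb : ∀ q : ℤ, cu q * cw (m - q) ≤ 4 * cw m * (cw q + cw (m - q)) := by
    intro q
    calc cu q * cw (m - q) ≤ cw q * cw (m - q) :=
          mul_le_mul_of_nonneg_right (cu_le_cw q) (cw_nonneg _)
      _ ≤ _ := cw_conv_pointwise m q
  have hBs : Summable fun q : ℤ => 4 * cw m * (cw q + cw (m - q)) :=
    ((summable_cw.add (summable_cw_sub m)).mul_left _)
  have hs : Summable (fun q : ℤ => cu q * cw (m - q)) :=
    Summable.of_nonneg_of_le (fun q => mul_nonneg (cu_nonneg q) (cw_nonneg _)) hb hBs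
  refine ⟨hs, ?_⟩
  calc ∑' q : ℤ, cu q * cw (m - q) ≤ ∑' q : ℤ, 4 * cw m * (cw q + cw (m - q)) :=
        Summable.tsum_le_tsum hb hs hBs
    _ = 4 * cw m * ((∑' x : ℤ, cw x) + ∑' q : ℤ, cw (m - q)) := by
        rw [tsum_mul_left, Summable.tsum_add summable_cw (summable_cw_sub m)]
    _ = 4 * cw m * ((∑' x : ℤ, cw x) + ∑' x : ℤ, cw x) := by
        congr 2
        exact (Equiv.subLeft m).tsum_eq cw
    _ = (8 * ∑' x : ℤ, cw x) * cw m := by ring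

lemma rpow_three_half (x : ℝ) (hx : 1 ≤ x) : x ^ (-(3/2):ℝ) = 1 / (x * Real.sqrt x) := by
  have hx0 : 0 < x := lt_of_lt_of_le one_pos hx
  rw [Real.rpow_neg hx0.le, Real.sqrt_eq_rpow]
  rw [show ((3:ℝ)/2) = 1 + 1/2 by norm_num, Real.rpow_add hx0, Real.rpow_one, one_div, inv_eq_one_div]

lemma base_pointwise (n q : ℤ) (hn : 1 ≤ |n|) :
    cu0 q * cw (n - q) ≤
      (1 / |(n:ℝ)|) * (2 * cw (n - q) + 4 * |(q:ℝ)| ^ (-(3/2):ℝ)) := by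
  have hN : (1:ℝ) ≤ |(n:ℝ)| := abs_int_one_le n hn
  by_cases hq : 1 ≤ |q|
  · have hx : (1:ℝ) ≤ |(q:ℝ)| := abs_int_one_le q hq
    set x := |(q:ℝ)| with hxdef
    set N := |(n:ℝ)| with hNdef
    have hLHS : cu0 q = 1 / x := by unfold cu0; rw [if_pos hq]
    rw [hLHS]
    by_cases hc : N ≤ 2 * x
    · have h1 : 1 / x ≤ 2 / N := by
        rw [div_le_div_iff₀ (by linarith) (by linarith)]; linarith
      have h2 : 1 / x * cw (n - q) ≤ 2 / N * cw (n - q) :=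
        mul_le_mul_of_nonneg_right h1 (cw_nonneg _)
      have h3 : (0:ℝ) ≤ 1 / N * (4 * x ^ (-(3/2):ℝ)) := by positivity
      calc 1 / x * cw (n - q) ≤ 2 / N * cw (n - q) := h2
        _ ≤ 1 / N * (2 * cw (n - q) + 4 * x ^ (-(3/2):ℝ)) := by
            rw [mul_add]
            have : 2 / N * cw (n - q) = 1 / N * (2 * cw (n - q)) := by ring
            linarith [h3, this.le]
    · push_neg at hc
      -- small q regime
      have hxN : x ≤ N := by linarith
      have hs : Real.sqrt x ≤ N := by
        have h1 : Real.sqrt x ≤ Real.sqrt N := Real.sqrt_le_sqrt hxN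
        have h2 : 1 ≤ Real.sqrt N := Real.one_le_sqrt.2 hN
        have h3 : Real.sqrt N * Real.sqrt N = N := Real.mul_self_sqrt (by linarith)
        nlinarith
      have hs1 : 1 ≤ Real.sqrt x := Real.one_le_sqrt.2 hx
      have hssq : Real.sqrt x * Real.sqrt x = x := Real.mul_self_sqrt (by linarith)
      have hM1 : (1:ℝ) ≤ max 1 |((n - q : ℤ):ℝ)| := one_le_maxabs _
      have hM2 : N / 2 ≤ max 1 |((n - q : ℤ):ℝ)| := by
        have habs : N - x ≤ |((n - q : ℤ):ℝ)| := by
          push_cast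
          have := abs_sub_abs_le_abs_sub (n:ℝ) (q:ℝ)
          simpa [hNdef, hxdef] using this
        calc N / 2 ≤ N - x := by linarith
          _ ≤ |((n - q : ℤ):ℝ)| := habs
          _ ≤ _ := le_max_right _ _
      set M := max 1 |((n - q : ℤ):ℝ)| with hMdef
      have hcwval : cw (n - q) = 1 / M ^ 2 := rfl
      have hrp : x ^ (-(3/2):ℝ) = 1 / (x * Real.sqrt x) := rpow_three_half x hx
      rw [hcwval, hrp]
      have hMpos : (0:ℝ) < M := by linarith
      have hxpos : (0:ℝ) < x := by linarith
      have hNpos : (0:ℝ) < N := by linarith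
      have key : 1 / x * (1 / M ^ 2) ≤ 1 / N * (4 * (1 / (x * Real.sqrt x))) := by
        rw [show (1:ℝ)/x * (1/M^2) = 1/(x*M^2) by ring,
          show (1:ℝ)/N*(4*(1/(x*Real.sqrt x))) = 4/(N*(x*Real.sqrt x)) by ring,
          div_le_div_iff₀ (by positivity) (by positivity)]
        have hM2' : N ≤ 2 * M := by linarith
        have hxs : x * Real.sqrt x ≤ x * N := mul_le_mul_of_nonneg_left hs hxpos.le
        have hNN : N * N ≤ (2*M) * (2*M) := mul_le_mul hM2' hM2' hNpos.le (by positivity)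
        have h5 : x * (N*N) ≤ x * ((2*M)*(2*M)) := mul_le_mul_of_nonneg_left hNN hxpos.le
        have h6 : N * (x * Real.sqrt x) ≤ N * (x * N) := mul_le_mul_of_nonneg_left hxs hNpos.le
        nlinarith [h5, h6]
      have h4 : (0:ℝ) ≤ 1 / N * (2 * (1 / M ^ 2)) := by positivity
      calc 1 / x * (1 / M ^ 2) ≤ 1 / N * (4 * (1 / (x * Real.sqrt x))) := key
        _ ≤ 1 / N * (2 * (1 / M ^ 2) + 4 * (1 / (x * Real.sqrt x))) := by
            rw [mul_add]; linarith
  · have : cu0 q = 0 := by unfold cu0; rw [if_neg hq]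
    rw [this, zero_mul]
    have h1 := cw_nonneg (n - q)
    have h2 : (0:ℝ) ≤ |(q:ℝ)| ^ (-(3/2):ℝ) := Real.rpow_nonneg (abs_nonneg _) _
    have h3 : (0:ℝ) ≤ 1 / |(n:ℝ)| := by positivity
    exact mul_nonneg h3 (by linarith)

noncomputable def cS : ℝ := ∑' x : ℤ, cw x
noncomputable def cT : ℝ := ∑' q : ℤ, |(q:ℝ)| ^ (-(3/2):ℝ)

lemma summable_rpow32 : Summable fun q : ℤ => |(q:ℝ)| ^ (-(3/2):ℝ) :=
  summable_abs_int_rpow (by norm_num)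

lemma cS_ge_one : (1:ℝ) ≤ cS := by
  have h := Summable.le_tsum summable_cw 0 (fun m _ => cw_nonneg m)
  have : cw 0 = 1 := by unfold cw; norm_num
  rw [this] at h
  exact h

lemma cT_nonneg : (0:ℝ) ≤ cT := tsum_nonneg fun q => Real.rpow_nonneg (abs_nonneg _) _

lemma base_sum (n : ℤ) (hn : 1 ≤ |n|) :
    Summable (fun q : ℤ => cu0 q * cw (n - q)) ∧
    ∑' q : ℤ, cu0 q * cw (n - q) ≤ (2 * cS + 4 * cT) / |(n:ℝ)| := by
  have hBs : Summable fun q : ℤ =>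
      (1 / |(n:ℝ)|) * (2 * cw (n - q) + 4 * |(q:ℝ)| ^ (-(3/2):ℝ)) :=
    (((summable_cw_sub n).mul_left 2).add (summable_rpow32.mul_left 4)).mul_left _
  have hnonneg : ∀ q : ℤ, 0 ≤ cu0 q * cw (n - q) :=
    fun q => mul_nonneg (cu0_nonneg q) (cw_nonneg _)
  have hs : Summable (fun q : ℤ => cu0 q * cw (n - q)) :=
    Summable.of_nonneg_of_le hnonneg (fun q => base_pointwise n q hn) hBs
  refine ⟨hs, ?_⟩
  calc ∑' q : ℤ, cu0 q * cw (n - q)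
      ≤ ∑' q : ℤ, (1 / |(n:ℝ)|) * (2 * cw (n - q) + 4 * |(q:ℝ)| ^ (-(3/2):ℝ)) :=
        Summable.tsum_le_tsum (fun q => base_pointwise n q hn) hs hBs
    _ = (1 / |(n:ℝ)|) * ((2 * ∑' q : ℤ, cw (n - q)) + 4 * cT) := by
        rw [tsum_mul_left, Summable.tsum_add ((summable_cw_sub n).mul_left 2) (summable_rpow32.mul_left 4),
          tsum_mul_left, tsum_mul_left]
        rfl
    _ = (2 * cS + 4 * cT) / |(n:ℝ)| := by
        have : ∑' q : ℤ, cw (n - q) = cS := (Equiv.subLeft n).tsum_eq cw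
        rw [this]; ring

noncomputable def cP (l : ℕ) (n : ℤ) (q : Fin (l + 1) → ℤ) : ℝ :=
  (∏ j, if j = (0 : Fin (l + 1)) then cu0 (q j) else cu (q j)) * cw (n - ∑ j, q j)

lemma cP_nonneg (l : ℕ) (n : ℤ) (q : Fin (l + 1) → ℤ) : 0 ≤ cP l n q :=
  mul_nonneg (Finset.prod_nonneg fun j _ => by
    by_cases h : j = (0 : Fin (l + 1)) <;> simp [h, cu0_nonneg, cu_nonneg]) (cw_nonneg _)

lemma main_lemma (l : ℕ) : ∃ C > (0:ℝ), ∀ n : ℤ, 1 ≤ |n| →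
    Summable (cP l n) ∧ ∑' q, cP l n q ≤ C / |(n:ℝ)| := by
  induction l with
  | zero =>
    refine ⟨2 * cS + 4 * cT, by nlinarith [cS_ge_one, cT_nonneg], fun n hn => ?_⟩
    set e : ℤ ≃ (Fin 1 → ℤ) := (Equiv.funUnique (Fin 1) ℤ).symm with he0
    have he : ∀ x : ℤ, cP 0 n (e x) = cu0 x * cw (n - x) := by
      intro x
      have hx : e x = fun _ => x := by rw [he0]; rfl
      rw [hx]
      simp [cP]
    obtain ⟨hs, hb⟩ := base_sum n hn
    constructor
    · rw [← e.summable_iff]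
      exact hs.congr fun x => (he x).symm
    · rw [← e.tsum_eq (cP 0 n)]
      calc ∑' x : ℤ, cP 0 n (e x) = ∑' x : ℤ, cu0 x * cw (n - x) := tsum_congr he
        _ ≤ _ := hb
  | succ l IH =>
    obtain ⟨C, hC, hIH⟩ := IH
    set A : ℝ := 8 * cS with hA
    have hApos : 0 < A := by nlinarith [cS_ge_one]
    refine ⟨A * C, by positivity, fun n hn => ?_⟩
    obtain ⟨hsP, hbP⟩ := hIH n hn
    set E : (Fin (l + 1) → ℤ) × ℤ ≃ (Fin (l + 2) → ℤ) :=
      (Equiv.prodComm _ _).trans (Fin.snocEquiv fun _ => ℤ) with hE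
    set R : (Fin (l + 1) → ℤ) × ℤ → ℝ := fun pr =>
      ((∏ j, if j = (0 : Fin (l + 1)) then cu0 (pr.1 j) else cu (pr.1 j)) * cu pr.2) *
        cw ((n - ∑ j, pr.1 j) - pr.2) with hR
    have hcomp : ∀ pr : (Fin (l + 1) → ℤ) × ℤ, cP (l + 1) n (E pr) = R pr := by
      rintro ⟨p, x⟩
      have hsnoc : E (p, x) = Fin.snoc p x := rfl
      rw [hsnoc]
      unfold cP
      rw [Fin.prod_univ_castSucc, Fin.sum_univ_castSucc]
      simp only [Fin.snoc_castSucc, Fin.snoc_last]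
      have h1 : (∏ j : Fin (l+1), if Fin.castSucc j = (0 : Fin (l+2)) then cu0 (p j) else cu (p j))
          = ∏ j : Fin (l+1), if j = (0 : Fin (l+1)) then cu0 (p j) else cu (p j) := by
        apply Finset.prod_congr rfl
        intro j _
        simp [Fin.castSucc_eq_zero_iff]
      have h2 : (if Fin.last (l+1) = (0 : Fin (l+2)) then cu0 x else cu x) = cu x := by
        rw [if_neg (Fin.last_pos).ne']
      rw [h1, h2, hR]
      have h3 : n - (∑ j : Fin (l+1), p j + x) = n - ∑ j : Fin (l+1), p j - x := by ring
      rw [h3]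
    have hRnonneg : ∀ pr, 0 ≤ R pr := by
      rintro ⟨p, x⟩
      exact mul_nonneg (mul_nonneg (Finset.prod_nonneg fun j _ => by
        by_cases h : j = (0 : Fin (l + 1)) <;> simp [h, cu0_nonneg, cu_nonneg]) (cu_nonneg x))
        (cw_nonneg _)
    have hinner : ∀ p : Fin (l+1) → ℤ, Summable (fun x : ℤ => R (p, x)) := by
      intro p
      have h := (cw_conv (n - ∑ j, p j)).1.mul_left
        (∏ j, if j = (0 : Fin (l+1)) then cu0 (p j) else cu (p j))
      exact h.congr fun x => by rw [hR]; ring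
    have hinner_eq : ∀ p : Fin (l+1) → ℤ, ∑' x : ℤ, R (p, x)
        = (∏ j, if j = (0:Fin (l+1)) then cu0 (p j) else cu (p j)) *
          ∑' x : ℤ, cu x * cw ((n - ∑ j, p j) - x) := by
      intro p
      rw [← tsum_mul_left]
      exact tsum_congr fun x => by rw [hR]; ring
    have hGnonneg : ∀ p : Fin (l+1) → ℤ,
        0 ≤ ∏ j, if j = (0:Fin (l+1)) then cu0 (p j) else cu (p j) :=
      fun p => Finset.prod_nonneg fun j _ => by
        by_cases h : j = (0:Fin (l+1)) <;> simp [h, cu0_nonneg, cu_nonneg]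
    have houter_le : ∀ p : Fin (l+1) → ℤ, ∑' x : ℤ, R (p, x) ≤ A * cP l n p := by
      intro p
      rw [hinner_eq p]
      calc _ ≤ (∏ j, if j = (0:Fin (l+1)) then cu0 (p j) else cu (p j)) *
            ((8 * ∑' x : ℤ, cw x) * cw (n - ∑ j, p j)) :=
            mul_le_mul_of_nonneg_left (cw_conv _).2 (hGnonneg p)
        _ = A * cP l n p := by rw [hA]; unfold cP cS; ring
    have houter_nonneg : ∀ p : Fin (l+1) → ℤ, 0 ≤ ∑' x : ℤ, R (p, x) :=
      fun p => tsum_nonneg fun x => hRnonneg _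
    have houter_summable : Summable fun p : Fin (l+1) → ℤ => ∑' x : ℤ, R (p, x) :=
      Summable.of_nonneg_of_le houter_nonneg houter_le (hsP.mul_left A)
    have hRsummable : Summable R :=
      (summable_prod_of_nonneg (Pi.le_def.2 hRnonneg)).2 ⟨hinner, houter_summable⟩
    constructor
    · rw [← E.summable_iff]
      exact hRsummable.congr fun pr => (hcomp pr).symm
    · rw [← E.tsum_eq (cP (l+1) n)]
      have h1 : ∑' pr, cP (l+1) n (E pr) = ∑' pr, R pr := tsum_congr hcomp
      rw [h1, Summable.tsum_prod' hRsummable hinner]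
      calc ∑' (p : Fin (l+1) → ℤ) (x : ℤ), R (p, x) ≤ ∑' p, A * cP l n p :=
            Summable.tsum_le_tsum houter_le houter_summable (hsP.mul_left A)
        _ = A * ∑' p, cP l n p := tsum_mul_left
        _ ≤ A * (C / |(n:ℝ)|) := mul_le_mul_of_nonneg_left hbP hApos.le
        _ = A * C / |(n:ℝ)| := by ring

/-- For every `l ≥ 1` there is `C > 0` such that for every integer `n` with `|n| ≥ 1`,
`∑* (1/|q₁|)(1/q₂²)⋯(1/q_l²)·(1/(n−q₁−⋯−q_l)²) ≤ C/|n|`, the sum ranging over tuples of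
nonzero integers whose complementary frequency is nonzero.  (Here `l ≥ 1` is encoded as
`l + 1`.) -/
theorem convolution_sum_linear (l : ℕ) :
    ∃ C > (0:ℝ), ∀ n : ℤ, 1 ≤ |n| →
      Summable (fun q : Fin (l + 1) → ℤ =>
        if (∀ j, 1 ≤ |q j|) ∧ 1 ≤ |n - ∑ j, q j| then
          (∏ j, if j = (0 : Fin (l + 1)) then (1 : ℝ) / |(q j : ℝ)| else 1 / ((q j : ℝ) ^ 2)) *
            (1 / (((n - ∑ j, q j : ℤ) : ℝ) ^ 2))
        else 0) ∧
      (∑' q : Fin (l + 1) → ℤ,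
        if (∀ j, 1 ≤ |q j|) ∧ 1 ≤ |n - ∑ j, q j| then
          (∏ j, if j = (0 : Fin (l + 1)) then (1 : ℝ) / |(q j : ℝ)| else 1 / ((q j : ℝ) ^ 2)) *
            (1 / (((n - ∑ j, q j : ℤ) : ℝ) ^ 2))
        else 0) ≤ C / |(n : ℝ)| := by
  obtain ⟨C, hC, h⟩ := main_lemma l
  refine ⟨C, hC, fun n hn => ?_⟩
  obtain ⟨hs, hb⟩ := h n hn
  set F : (Fin (l + 1) → ℤ) → ℝ := fun q =>
    if (∀ j, 1 ≤ |q j|) ∧ 1 ≤ |n - ∑ j, q j| then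
      (∏ j, if j = (0 : Fin (l + 1)) then (1 : ℝ) / |(q j : ℝ)| else 1 / ((q j : ℝ) ^ 2)) *
        (1 / (((n - ∑ j, q j : ℤ) : ℝ) ^ 2))
    else 0 with hF
  have hle : ∀ q, F q ≤ cP l n q := by
    intro q
    simp only [hF]
    by_cases hcond : (∀ j, 1 ≤ |q j|) ∧ 1 ≤ |n - ∑ j, q j|
    · rw [if_pos hcond]
      obtain ⟨h1, h2⟩ := hcond
      unfold cP
      have hp : (∏ j, if j = (0 : Fin (l + 1)) then (1 : ℝ) / |(q j : ℝ)| else 1 / ((q j : ℝ) ^ 2))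
          = ∏ j, if j = (0 : Fin (l + 1)) then cu0 (q j) else cu (q j) := by
        apply Finset.prod_congr rfl
        intro j _
        by_cases hj : j = (0 : Fin (l + 1))
        · rw [if_pos hj, if_pos hj]
          unfold cu0
          rw [if_pos (h1 j)]
        · rw [if_neg hj, if_neg hj]
          unfold cu
          rw [if_pos (h1 j)]
      rw [hp, cw_eq _ h2]
    · rw [if_neg hcond]
      exact cP_nonneg l n q
  have h0 : ∀ q, 0 ≤ F q := by
    intro q
    simp only [hF]
    split
    · apply mul_nonneg
      · apply Finset.prod_nonneg
        intro j _
        by_cases hj : j = (0 : Fin (l + 1)) <;> simp [hj] <;> positivity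
      · positivity
    · exact le_rfl
  have hsF : Summable F := Summable.of_nonneg_of_le h0 hle hs
  exact ⟨hsF, (Summable.tsum_le_tsum hle hsF hs).trans hb⟩
end

section
/- Let p ≥ 1 and let a₁,…,a_p be real numbers with sgn(a_p) = (−1)^p (i.e., (−1)^p a_p > 0). Then there exists M > 0 such that for every real W ≥ M and every integer n ≥ 2: (−1)^{p+1} a_p W^{2p+2} n^{2p+2} + Σ_{j=2}^{p} (−1)^j (a_j W² + a_{j−1}) W^{2j} n^{2j} − a₁ W n² < 0. -/
/-- For the flows with `F = Σ_{j=1}^p a_j ∂^{2j}k/∂s^{2j} + H`: if `sgn(a_p) = (−1)^p`, then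
for all sufficiently large average curvatures `W` the stability polynomial
`(−1)^{p+1} a_p W^{2p+2} n^{2p+2} + Σ_{j=2}^p (−1)^j (a_j W² + a_{j−1}) W^{2j} n^{2j} − a₁ W n²`
is negative for every integer `n ≥ 2`. -/
theorem family_I_stability (p : ℕ) (hp : 1 ≤ p) (a : ℕ → ℝ)
    (hsign : 0 < (-1 : ℝ) ^ p * a p) :
    ∃ M > (0:ℝ), ∀ W : ℝ, M ≤ W → ∀ n : ℤ, 2 ≤ n →
      (-1 : ℝ) ^ (p + 1) * a p * W ^ (2 * p + 2) * (n : ℝ) ^ (2 * p + 2) +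
        (∑ j ∈ Finset.Icc 2 p,
          (-1 : ℝ) ^ j * (a j * W ^ 2 + a (j - 1)) * W ^ (2 * j) * (n : ℝ) ^ (2 * j)) -
        a 1 * W * (n : ℝ) ^ 2 < 0 := by
  set c : ℝ := (-1 : ℝ) ^ p * a p with hc_def
  have hc : 0 < c := hsign
  set K : ℝ := ∑ j ∈ Finset.Icc 1 p, |a j| with hK_def
  have hK : 0 ≤ K := Finset.sum_nonneg fun j _ => abs_nonneg _
  have hjK : ∀ j, 1 ≤ j → j ≤ p → |a j| ≤ K := by
    intro j h1 h2
    exact Finset.single_le_sum (fun i _ => abs_nonneg (a i))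
      (Finset.mem_Icc.mpr ⟨h1, h2⟩)
  refine ⟨max 1 ((2 * p + 1) * K / c + 1), lt_of_lt_of_le one_pos (le_max_left _ _), ?_⟩
  intro W hW n hn
  have hW1 : 1 ≤ W := le_trans (le_max_left _ _) hW
  have hW0 : 0 < W := lt_of_lt_of_le one_pos hW1
  have hcW : (2 * (p : ℝ) + 1) * K < c * W ^ 2 := by
    have h1 : (2 * (p : ℝ) + 1) * K / c + 1 ≤ W := le_trans (le_max_right _ _) hW
    have h2 : (2 * (p : ℝ) + 1) * K / c < W := by linarith
    rw [div_lt_iff₀ hc] at h2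
    nlinarith [mul_le_mul_of_nonneg_left (mul_le_mul_of_nonneg_left hW1 hW0.le) hc.le]
  set N : ℝ := (n : ℝ) with hN_def
  have hN : 2 ≤ N := by
    have h : ((2:ℤ):ℝ) ≤ ((n:ℤ):ℝ) := by exact_mod_cast hn
    simpa using h
  have hN1 : 1 ≤ N := by linarith
  have hN0 : 0 < N := by linarith
  have hlead : (-1 : ℝ) ^ (p + 1) * a p = -c := by
    rw [pow_succ]; ring
  have hWp : W ≤ W ^ (2 * p) := by
    calc W = W ^ 1 := (pow_one W).symm
    _ ≤ W ^ (2 * p) := pow_le_pow_right₀ hW1 (by omega)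
  have hNp : N ^ 2 ≤ N ^ (2 * p) := pow_le_pow_right₀ hN1 (by omega)
  have hXpos : 0 < W ^ (2 * p) * N ^ (2 * p) := by positivity
  have ha1 : -(a 1) * W * N ^ 2 ≤ K * (W ^ (2 * p) * N ^ (2 * p)) := by
    have h1 : -(a 1) ≤ K := le_trans (neg_le_abs _) (hjK 1 le_rfl hp)
    have h2 : -(a 1) * W * N ^ 2 ≤ K * W * N ^ 2 := by
      apply mul_le_mul_of_nonneg_right _ (by positivity)
      exact mul_le_mul_of_nonneg_right h1 hW0.le
    calc -(a 1) * W * N ^ 2 ≤ K * W * N ^ 2 := h2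
    _ ≤ K * (W ^ (2 * p) * N ^ (2 * p)) := by
        rw [mul_assoc]
        apply mul_le_mul_of_nonneg_left _ hK
        exact mul_le_mul hWp hNp (by positivity) (by positivity)
  have habs : ∀ j, (-1 : ℝ) ^ j * (a j * W ^ 2 + a (j - 1))
      ≤ |a j| * W ^ 2 + |a (j - 1)| := by
    intro j
    calc (-1 : ℝ) ^ j * (a j * W ^ 2 + a (j - 1))
        ≤ |(-1 : ℝ) ^ j * (a j * W ^ 2 + a (j - 1))| := le_abs_self _
      _ = |a j * W ^ 2 + a (j - 1)| := by
          rw [abs_mul, abs_pow, abs_neg, abs_one, one_pow, one_mul]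
      _ ≤ |a j * W ^ 2| + |a (j - 1)| := abs_add_le _ _
      _ = |a j| * W ^ 2 + |a (j - 1)| := by
          rw [abs_mul, abs_pow, abs_of_nonneg hW0.le]
  -- bound the sum
  have hsum : (∑ j ∈ Finset.Icc 2 p,
      (-1 : ℝ) ^ j * (a j * W ^ 2 + a (j - 1)) * W ^ (2 * j) * N ^ (2 * j))
      ≤ c * W ^ (2 * p + 2) * N ^ (2 * p) + 2 * p * K * (W ^ (2 * p) * N ^ (2 * p)) := by
    rcases eq_or_lt_of_le hp with hp1 | hp2
    · rw [← hp1]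
      rw [show Finset.Icc 2 1 = (∅ : Finset ℕ) from rfl, Finset.sum_empty]
      have h1 : 0 < c * W ^ (2 * 1 + 2) * N ^ (2 * 1) :=
        mul_pos (mul_pos hc (pow_pos hW0 _)) (pow_pos hN0 _)
      have h2 : 0 ≤ 2 * ((1:ℕ):ℝ) * K * (W ^ (2 * 1) * N ^ (2 * 1)) :=
        mul_nonneg (mul_nonneg (by norm_num) hK) (by positivity)
      norm_num at h1 h2 ⊢
      linarith
    · obtain ⟨q, rfl⟩ : ∃ q, p = q + 1 := ⟨p - 1, by omega⟩
      have hq1 : 1 ≤ q := by omega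
      rw [Finset.sum_Icc_succ_top (by omega : 2 ≤ q + 1)]
      set X : ℝ := W ^ (2 * (q + 1)) * N ^ (2 * (q + 1)) with hX_def
      have hX0 : 0 ≤ X := by positivity
      -- top term bound
      have htop : (-1 : ℝ) ^ (q + 1) * (a (q + 1) * W ^ 2 + a (q + 1 - 1))
            * W ^ (2 * (q + 1)) * N ^ (2 * (q + 1))
          ≤ c * W ^ (2 * (q + 1) + 2) * N ^ (2 * (q + 1)) + K * X := by
        have e : (-1 : ℝ) ^ (q + 1) * (a (q + 1) * W ^ 2 + a (q + 1 - 1))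
              * W ^ (2 * (q + 1)) * N ^ (2 * (q + 1))
            = c * W ^ (2 * (q + 1) + 2) * N ^ (2 * (q + 1))
              + ((-1 : ℝ) ^ (q + 1) * a q) * X := by
          rw [hc_def, hX_def, pow_add (W) (2 * (q+1)) 2]
          norm_num
          ring
        rw [e]
        have h1 : (-1 : ℝ) ^ (q + 1) * a q ≤ K := by
          calc (-1 : ℝ) ^ (q + 1) * a q ≤ |(-1 : ℝ) ^ (q + 1) * a q| := le_abs_self _
            _ = |a q| := by rw [abs_mul, abs_pow, abs_neg, abs_one, one_pow, one_mul]
            _ ≤ K := hjK q hq1 (by omega)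
        have := mul_le_mul_of_nonneg_right h1 hX0
        linarith
      -- middle terms bound
      have hmid : (∑ j ∈ Finset.Icc 2 q,
          (-1 : ℝ) ^ j * (a j * W ^ 2 + a (j - 1)) * W ^ (2 * j) * N ^ (2 * j))
          ≤ (q - 1 : ℕ) * (2 * K * X) := by
        have hcard : (Finset.Icc 2 q).card = q - 1 := by
          rw [Nat.card_Icc]; omega
        rw [← hcard]
        rw [← nsmul_eq_mul]
        apply Finset.sum_le_card_nsmul
        intro j hj
        obtain ⟨hj2, hjq⟩ := Finset.mem_Icc.mp hj
        have hY0 : (0:ℝ) ≤ W ^ (2 * j) * N ^ (2 * j) := by positivity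
        have step1 : (-1 : ℝ) ^ j * (a j * W ^ 2 + a (j - 1)) * W ^ (2 * j) * N ^ (2 * j)
            ≤ (|a j| * W ^ 2 + |a (j - 1)|) * (W ^ (2 * j) * N ^ (2 * j)) := by
          have := mul_le_mul_of_nonneg_right (habs j) hY0
          calc (-1 : ℝ) ^ j * (a j * W ^ 2 + a (j - 1)) * W ^ (2 * j) * N ^ (2 * j)
              = ((-1 : ℝ) ^ j * (a j * W ^ 2 + a (j - 1))) * (W ^ (2 * j) * N ^ (2 * j)) := by
                ring
            _ ≤ _ := this
        have step2 : (|a j| * W ^ 2 + |a (j - 1)|) * (W ^ (2 * j) * N ^ (2 * j))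
            ≤ (K * W ^ 2 + K) * (W ^ (2 * j) * N ^ (2 * j)) := by
          apply mul_le_mul_of_nonneg_right _ hY0
          have h1 : |a j| ≤ K := hjK j (by omega) (by omega)
          have h2 : |a (j - 1)| ≤ K := hjK (j - 1) (by omega) (by omega)
          have := mul_le_mul_of_nonneg_right h1 (sq_nonneg W)
          linarith
        have b1 : W ^ (2 * j + 2) ≤ W ^ (2 * (q + 1)) := pow_le_pow_right₀ hW1 (by omega)
        have b2 : W ^ (2 * j) ≤ W ^ (2 * (q + 1)) := pow_le_pow_right₀ hW1 (by omega)
        have b3 : N ^ (2 * j) ≤ N ^ (2 * (q + 1)) := pow_le_pow_right₀ hN1 (by omega)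
        have step3 : (K * W ^ 2 + K) * (W ^ (2 * j) * N ^ (2 * j)) ≤ 2 * K * X := by
          have e : (K * W ^ 2 + K) * (W ^ (2 * j) * N ^ (2 * j))
              = K * (W ^ (2 * j + 2) * N ^ (2 * j)) + K * (W ^ (2 * j) * N ^ (2 * j)) := by
            rw [pow_add]; ring
          have m1 : W ^ (2 * j + 2) * N ^ (2 * j) ≤ X :=
            mul_le_mul b1 b3 (by positivity) (by positivity)
          have m2 : W ^ (2 * j) * N ^ (2 * j) ≤ X :=
            mul_le_mul b2 b3 (by positivity) (by positivity)
          calc (K * W ^ 2 + K) * (W ^ (2 * j) * N ^ (2 * j))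
              = K * (W ^ (2 * j + 2) * N ^ (2 * j)) + K * (W ^ (2 * j) * N ^ (2 * j)) := e
            _ ≤ K * X + K * X :=
                add_le_add (mul_le_mul_of_nonneg_left m1 hK) (mul_le_mul_of_nonneg_left m2 hK)
            _ = 2 * K * X := by ring
        linarith
      have hq2 : ((q - 1 : ℕ) : ℝ) * (2 * K * X) + K * X ≤ 2 * (((q + 1 : ℕ)) : ℝ) * K * X := by
        have hKX : 0 ≤ K * X := mul_nonneg hK hX0
        have hcast : ((q - 1 : ℕ) : ℝ) = (q : ℝ) - 1 := by
          have h1q : (1:ℕ) ≤ q := hq1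
          push_cast [h1q]; ring
        have hcast2 : (((q + 1 : ℕ)) : ℝ) = (q : ℝ) + 1 := by push_cast; ring
        rw [hcast, hcast2]
        nlinarith
      linarith [hmid, htop, hq2]
  -- combine
  rw [hlead]
  clear_value c K N
  clear hjK hK_def hc_def hN_def hW hsign
  have hfin : -c * W ^ (2 * p + 2) * N ^ (2 * p + 2)
      + (c * W ^ (2 * p + 2) * N ^ (2 * p) + 2 * p * K * (W ^ (2 * p) * N ^ (2 * p)))
      + K * (W ^ (2 * p) * N ^ (2 * p)) < 0 := by
    have hfac : -c * W ^ (2 * p + 2) * N ^ (2 * p + 2)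
        + (c * W ^ (2 * p + 2) * N ^ (2 * p) + 2 * p * K * (W ^ (2 * p) * N ^ (2 * p)))
        + K * (W ^ (2 * p) * N ^ (2 * p))
        = (W ^ (2 * p) * N ^ (2 * p)) * (-c * W ^ 2 * N ^ 2 + c * W ^ 2 + (2 * p + 1) * K) := by
      rw [pow_add, pow_add]; ring
    rw [hfac]
    apply mul_neg_of_pos_of_neg hXpos
    have h4 : 4 ≤ N ^ 2 := by nlinarith
    have hcw2 : 0 < c * W ^ 2 := mul_pos hc (by positivity)
    have h5 : c * W ^ 2 * 4 ≤ c * W ^ 2 * N ^ 2 :=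
      mul_le_mul_of_nonneg_left h4 hcw2.le
    linarith
  linarith [hsum, ha1, hfin]
end

section
/- Let p ≥ 1 and let a₁,…,a_p be real numbers with sgn(a_p) = (−1)^p (i.e., (−1)^p a_p > 0) and (3/4)|a_p| ≥ Σ_{j=1}^{p−1} (5/4^{j+1})|a_{p−j}|. Then for every real W > 0 and every integer n ≥ 2: (−1)^{p+1} a_p W^{2p+2} n^{2p+2} + Σ_{j=0}^{p−2} (−1)^{p−j} (a_{p−j} + a_{p−j−1}) W^{2p+2} n^{2p−2j} − a₁ W^{2p+2} n² < 0. -/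
/-- For the flows with `F = Σ_{j=0}^{p−1} a_{p−j} k^{2j} ∂^{2p−2j}k/∂s^{2p−2j} + H`: if
`sgn(a_p) = (−1)^p` and `(3/4)|a_p| ≥ Σ_{j=1}^{p−1} (5/4^{j+1})|a_{p−j}|`, then for every
`W > 0` the stability polynomial
`(−1)^{p+1} a_p W^{2p+2} n^{2p+2} + Σ_{j=0}^{p−2} (−1)^{p−j}(a_{p−j}+a_{p−j−1}) W^{2p+2} n^{2p−2j}
  − a₁ W^{2p+2} n²` is negative for every integer `n ≥ 2`. -/
theorem family_II_stability (p : ℕ) (hp : 1 ≤ p) (a : ℕ → ℝ)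
    (hsign : 0 < (-1 : ℝ) ^ p * a p)
    (hdom : (3 / 4 : ℝ) * |a p| ≥ ∑ j ∈ Finset.Icc 1 (p - 1), (5 / 4 ^ (j + 1) : ℝ) * |a (p - j)|) :
    ∀ W : ℝ, 0 < W → ∀ n : ℤ, 2 ≤ n →
      (-1 : ℝ) ^ (p + 1) * a p * W ^ (2 * p + 2) * (n : ℝ) ^ (2 * p + 2) +
        (∑ j ∈ Finset.range (p - 1),
          (-1 : ℝ) ^ (p - j) * (a (p - j) + a (p - j - 1)) * W ^ (2 * p + 2) *
            (n : ℝ) ^ (2 * p - 2 * j)) -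
        a 1 * W ^ (2 * p + 2) * (n : ℝ) ^ 2 < 0 := by
  intro W hW n hn
  have hx2 : (2 : ℝ) ≤ (n : ℝ) := by exact_mod_cast hn
  set x : ℝ := (n : ℝ) with hxdef
  have hx0 : (0 : ℝ) < x := by linarith
  have hx4 : (4 : ℝ) ≤ x ^ 2 := by nlinarith
  have hWc : (0 : ℝ) < W ^ (2 * p + 2) := pow_pos hW _
  have habs : |a p| = (-1 : ℝ) ^ p * a p := by
    have h1 : |(-1 : ℝ) ^ p * a p| = (-1 : ℝ) ^ p * a p := abs_of_pos hsign
    rw [abs_mul, abs_pow, abs_neg, abs_one, one_pow, one_mul] at h1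
    exact h1
  have habspos : (0 : ℝ) < |a p| := habs ▸ hsign
  set f : ℕ → ℝ := fun j => (-1 : ℝ) ^ (p - j) * a (p - j) * x ^ (2 * p - 2 * j) with hfdef
  set g : ℕ → ℝ := fun j => (-1 : ℝ) ^ (p - j) * a (p - j) * x ^ (2 * p - 2 * j + 2) with hgdef
  -- rewrite each summand
  have hsum1 : ∑ j ∈ Finset.range (p - 1),
      (-1 : ℝ) ^ (p - j) * (a (p - j) + a (p - j - 1)) * x ^ (2 * p - 2 * j)
      = (∑ j ∈ Finset.range (p - 1), f j) - ∑ j ∈ Finset.range (p - 1), g (j + 1) := by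
    rw [← Finset.sum_sub_distrib]
    refine Finset.sum_congr rfl fun j hj => ?_
    rw [Finset.mem_range] at hj
    have h3 : p - j - 1 = p - (j + 1) := by omega
    have h2 : 2 * p - 2 * (j + 1) + 2 = 2 * p - 2 * j := by omega
    have h1 : p - j = (p - (j + 1)) + 1 := by omega
    simp only [hfdef, hgdef]
    rw [h3, h2, h1]
    ring
  have hIccIco : Finset.Icc 1 (p - 1) = Finset.Ico 1 p := by
    rw [show p = p - 1 + 1 from by omega, Finset.Ico_add_one_right_eq_Icc]
    rw [show p - 1 + 1 - 1 = p - 1 from by omega]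
  have hshift_g : ∑ j ∈ Finset.range (p - 1), g (j + 1) = ∑ j ∈ Finset.Icc 1 (p - 1), g j := by
    rw [hIccIco, Finset.sum_Ico_eq_sum_range]
    rw [show p - 1 = p - 1 from rfl]
    exact Finset.sum_congr rfl fun j _ => by rw [add_comm]
  have hshift_f : ∑ j ∈ Finset.range (p - 1), f (j + 1) = ∑ j ∈ Finset.Icc 1 (p - 1), f j := by
    rw [hIccIco, Finset.sum_Ico_eq_sum_range]
    exact Finset.sum_congr rfl fun j _ => by rw [add_comm]
  have hfp : f (p - 1) = -(a 1 * x ^ 2) := by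
    simp only [hfdef]
    rw [show p - (p - 1) = 1 from by omega, show 2 * p - 2 * (p - 1) = 2 from by omega]
    ring
  have hrange : (∑ j ∈ Finset.range (p - 1), f j) - a 1 * x ^ 2
      = f 0 + ∑ j ∈ Finset.Icc 1 (p - 1), f j := by
    have h := Finset.sum_range_succ f (p - 1)
    have h' := Finset.sum_range_succ' f (p - 1)
    rw [show p - 1 + 1 = p from by omega] at h h'
    rw [hfp] at h
    rw [hshift_f] at h'
    linarith
  have hg0 : (-1 : ℝ) ^ (p + 1) * a p * x ^ (2 * p + 2) = -g 0 := by
    simp only [hgdef, Nat.sub_zero, Nat.mul_zero]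
    ring
  have hP : (-1 : ℝ) ^ (p + 1) * a p * x ^ (2 * p + 2) +
      (∑ j ∈ Finset.range (p - 1),
        (-1 : ℝ) ^ (p - j) * (a (p - j) + a (p - j - 1)) * x ^ (2 * p - 2 * j)) -
      a 1 * x ^ 2
      = (f 0 - g 0) + ∑ j ∈ Finset.Icc 1 (p - 1), (f j - g j) := by
    rw [hsum1, hshift_g, hg0, Finset.sum_sub_distrib]
    linarith
  -- bounds
  have hb0 : f 0 - g 0 ≤ -(3 / 4) * |a p| * x ^ (2 * p + 2) := by
    simp only [hfdef, hgdef, Nat.sub_zero, Nat.mul_zero]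
    rw [habs]
    have hxp : x ^ (2 * p) * 4 ≤ x ^ (2 * p + 2) := by
      have h1 : x ^ (2 * p) * x ^ 2 = x ^ (2 * p + 2) := by rw [← pow_add]
      nlinarith [pow_nonneg hx0.le (2 * p)]
    nlinarith [hsign, pow_pos hx0 (2 * p), mul_pos hsign (pow_pos hx0 (2 * p))]
  have hb1 : ∀ j ∈ Finset.Icc 1 (p - 1),
      f j - g j ≤ (1 / 4 ^ j) * |a (p - j)| * x ^ (2 * p + 2) := by
    intro j hj
    rw [Finset.mem_Icc] at hj
    have h4pos : (0 : ℝ) < 4 ^ j := by positivity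
    have key : x ^ (2 * p - 2 * j + 2) * 4 ^ j ≤ x ^ (2 * p + 2) := by
      have h4 : (4 : ℝ) ^ j ≤ (x ^ 2) ^ j := pow_le_pow_left₀ (by norm_num) hx4 j
      have hmm : x ^ (2 * p - 2 * j + 2) * (x ^ 2) ^ j = x ^ (2 * p + 2) := by
        rw [← pow_mul, ← pow_add]
        congr 1
        omega
      nlinarith [pow_pos hx0 (2 * p - 2 * j + 2)]
    have hce : |(-1 : ℝ) ^ (p - j) * a (p - j)| = |a (p - j)| := by
      rw [abs_mul, abs_pow, abs_neg, abs_one, one_pow, one_mul]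
    have hle1 : f j - g j ≤ |a (p - j)| * x ^ (2 * p - 2 * j + 2) := by
      simp only [hfdef, hgdef]
      have hre : (-1 : ℝ) ^ (p - j) * a (p - j) * x ^ (2 * p - 2 * j) -
          (-1 : ℝ) ^ (p - j) * a (p - j) * x ^ (2 * p - 2 * j + 2)
          = ((-1 : ℝ) ^ (p - j) * a (p - j)) * (x ^ (2 * p - 2 * j) - x ^ (2 * p - 2 * j + 2)) := by
        ring
      rw [hre]
      have hmono : x ^ (2 * p - 2 * j) ≤ x ^ (2 * p - 2 * j + 2) := by
        apply pow_le_pow_right₀ (by linarith)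
        omega
      calc ((-1 : ℝ) ^ (p - j) * a (p - j)) * (x ^ (2 * p - 2 * j) - x ^ (2 * p - 2 * j + 2))
          ≤ |((-1 : ℝ) ^ (p - j) * a (p - j)) * (x ^ (2 * p - 2 * j) - x ^ (2 * p - 2 * j + 2))| :=
            le_abs_self _
        _ = |a (p - j)| * |x ^ (2 * p - 2 * j) - x ^ (2 * p - 2 * j + 2)| := by
            rw [abs_mul, hce]
        _ ≤ |a (p - j)| * x ^ (2 * p - 2 * j + 2) := by
            apply mul_le_mul_of_nonneg_left _ (abs_nonneg _)
            rw [abs_sub_comm, abs_of_nonneg (by linarith)]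
            have := pow_nonneg hx0.le (2 * p - 2 * j)
            linarith
    have hle2 : |a (p - j)| * x ^ (2 * p - 2 * j + 2) ≤ |a (p - j)| * x ^ (2 * p + 2) / 4 ^ j := by
      rw [le_div_iff₀ h4pos, mul_assoc]
      exact mul_le_mul_of_nonneg_left key (abs_nonneg _)
    calc f j - g j ≤ |a (p - j)| * x ^ (2 * p - 2 * j + 2) := hle1
      _ ≤ |a (p - j)| * x ^ (2 * p + 2) / 4 ^ j := hle2
      _ = (1 / 4 ^ j) * |a (p - j)| * x ^ (2 * p + 2) := by ring
  have hsumb : ∑ j ∈ Finset.Icc 1 (p - 1), (f j - g j) ≤ (3 / 5) * |a p| * x ^ (2 * p + 2) := by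
    calc ∑ j ∈ Finset.Icc 1 (p - 1), (f j - g j)
        ≤ ∑ j ∈ Finset.Icc 1 (p - 1), (1 / 4 ^ j) * |a (p - j)| * x ^ (2 * p + 2) :=
          Finset.sum_le_sum hb1
      _ = (4 / 5) * x ^ (2 * p + 2) *
          ∑ j ∈ Finset.Icc 1 (p - 1), (5 / 4 ^ (j + 1) : ℝ) * |a (p - j)| := by
          rw [Finset.mul_sum]
          refine Finset.sum_congr rfl fun j _ => ?_
          have h4pos : (0 : ℝ) < 4 ^ j := by positivity
          rw [pow_succ]
          field_simp
          ring
      _ ≤ (4 / 5) * x ^ (2 * p + 2) * ((3 / 4) * |a p|) := by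
          apply mul_le_mul_of_nonneg_left hdom (by positivity)
      _ = (3 / 5) * |a p| * x ^ (2 * p + 2) := by ring
  have hX : (0 : ℝ) < x ^ (2 * p + 2) := pow_pos hx0 _
  have hfinal : (-1 : ℝ) ^ (p + 1) * a p * x ^ (2 * p + 2) +
      (∑ j ∈ Finset.range (p - 1),
        (-1 : ℝ) ^ (p - j) * (a (p - j) + a (p - j - 1)) * x ^ (2 * p - 2 * j)) -
      a 1 * x ^ 2 < 0 := by
    rw [hP]
    linarith [hb0, hsumb, mul_pos habspos hX]
  have hs : ∑ j ∈ Finset.range (p - 1),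
      (-1 : ℝ) ^ (p - j) * (a (p - j) + a (p - j - 1)) * W ^ (2 * p + 2) * x ^ (2 * p - 2 * j)
      = W ^ (2 * p + 2) * ∑ j ∈ Finset.range (p - 1),
        (-1 : ℝ) ^ (p - j) * (a (p - j) + a (p - j - 1)) * x ^ (2 * p - 2 * j) := by
    rw [Finset.mul_sum]
    exact Finset.sum_congr rfl fun j _ => by ring
  rw [hs]
  have hfac : (-1 : ℝ) ^ (p + 1) * a p * W ^ (2 * p + 2) * x ^ (2 * p + 2) +
      W ^ (2 * p + 2) * (∑ j ∈ Finset.range (p - 1),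
        (-1 : ℝ) ^ (p - j) * (a (p - j) + a (p - j - 1)) * x ^ (2 * p - 2 * j)) -
      a 1 * W ^ (2 * p + 2) * x ^ 2
      = W ^ (2 * p + 2) * ((-1 : ℝ) ^ (p + 1) * a p * x ^ (2 * p + 2) +
        (∑ j ∈ Finset.range (p - 1),
          (-1 : ℝ) ^ (p - j) * (a (p - j) + a (p - j - 1)) * x ^ (2 * p - 2 * j)) -
        a 1 * x ^ 2) := by ring
  rw [hfac]
  exact mul_neg_of_pos_of_neg hWc hfinal
end

section
/- There exist constants δ₀ > 0 and C > 0 such that the following holds. Let c > 0, A ∈ ℂ, and let r: ℝ → ℝ be a continuous 2π-periodic function with ‖r‖_∞ ≤ δ for some 0 < δ ≤ δ₀, and suppose |A| ≤ δ₀. Define k(θ) = c·(1 + 2 Re(A e^{−iθ}) + r(θ)) (so k > 0). If ∫₀^{2π} e^{iθ}/k(θ) dθ = 0, then |A| ≤ C·δ. -/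
open Complex intervalIntegral Real

lemma int_exp_I : (∫ θ in (0:ℝ)..(2*π), Complex.exp (Complex.I * θ)) = 0 := by
  rw [integral_exp_mul_complex Complex.I_ne_zero]
  simp [mul_comm Complex.I, Complex.exp_two_pi_mul_I]

lemma int_exp_2I : (∫ θ in (0:ℝ)..(2*π), Complex.exp (2 * Complex.I * θ)) = 0 := by
  have h2 : (2 * Complex.I : ℂ) ≠ 0 := by simp [Complex.I_ne_zero]
  rw [integral_exp_mul_complex h2]
  have h3 : Complex.exp (2*Complex.I*(2*(π:ℂ))) = 1 := by
    rw [show (2*Complex.I*(2*(π:ℂ))) = (2:ℤ)*(2*π*Complex.I) by push_cast; ring]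
    exact Complex.exp_int_mul_two_pi_mul_I 2
  simp [h3]

lemma alg_id (E G F cc : ℂ) (hF : F = 1 + G) (hFne : F ≠ 0) (hcc : cc ≠ 0) :
    E / (cc * F) = cc⁻¹ * ((E - E * G) + E * (G ^ 2 / F)) := by
  subst hF
  field_simp
  ring

/-- If a positive `2π`-periodic function `k(θ) = c(1 + 2 Re(A e^{−iθ}) + r(θ))` with
`‖r‖_∞ ≤ δ ≤ δ₀` and `|A| ≤ δ₀` satisfies the geometric constraint
`∫₀^{2π} e^{iθ}/k(θ) dθ = 0`, then `|A| ≤ C δ`. -/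
theorem first_mode_from_constraint :
    ∃ δ₀ > (0:ℝ), ∃ C > (0:ℝ),
      ∀ (c : ℝ) (A : ℂ) (r : ℝ → ℝ) (δ : ℝ),
        0 < c → Continuous r → Function.Periodic r (2 * Real.pi) →
        0 < δ → δ ≤ δ₀ → (∀ θ : ℝ, |r θ| ≤ δ) → ‖A‖ ≤ δ₀ →
        (∫ θ in (0:ℝ)..(2 * Real.pi),
            Complex.exp (Complex.I * (θ : ℂ)) /
              ((c * (1 + 2 * (A * Complex.exp (-Complex.I * (θ : ℂ))).re + r θ) : ℝ) : ℂ)) = 0 →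
        ‖A‖ ≤ C * δ := by
  refine ⟨1/100, by norm_num, 2, by norm_num, ?_⟩
  intro c A r δ hc hr hper hδ hδ0 hrδ hA hint
  set a := ‖A‖ with ha
  have ha0 : 0 ≤ a := norm_nonneg A
  set g : ℝ → ℝ := fun θ => 2 * (A * Complex.exp (-Complex.I * θ)).re + r θ with hgdef
  set f : ℝ → ℝ := fun θ => 1 + g θ with hfdef
  -- basic bounds
  have hreb : ∀ θ : ℝ, |(A * Complex.exp (-Complex.I * θ)).re| ≤ a := by
    intro θ
    calc |(A * Complex.exp (-Complex.I * θ)).re| ≤ ‖A * Complex.exp (-Complex.I * θ)‖ :=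
          Complex.abs_re_le_norm _
      _ = a := by rw [norm_mul, Complex.norm_exp]; simp [ha]
  have hgb : ∀ θ : ℝ, |g θ| ≤ 2 * a + δ := by
    intro θ
    calc |g θ| ≤ |2 * (A * Complex.exp (-Complex.I * θ)).re| + |r θ| := abs_add_le _ _
      _ ≤ 2 * a + δ := by
          rw [abs_mul, (by norm_num : |(2:ℝ)| = 2)]
          linarith [hreb θ, hrδ θ]
  have h3 : 2 * a + δ ≤ 3/100 := by linarith
  have hfb : ∀ θ : ℝ, 97/100 ≤ f θ := by
    intro θ
    have h := abs_le.mp ((hgb θ).trans h3)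
    simp only [hfdef]
    linarith [h.1]
  have hfpos : ∀ θ : ℝ, 0 < f θ := fun θ => lt_of_lt_of_le (by norm_num) (hfb θ)
  have hfne : ∀ θ : ℝ, f θ ≠ 0 := fun θ => (hfpos θ).ne'
  have hcne : (c : ℂ) ≠ 0 := Complex.ofReal_ne_zero.mpr hc.ne'
  -- continuity
  have hcontg : Continuous g := by simp only [hgdef]; fun_prop
  have hcontf : Continuous f := continuous_const.add hcontg
  have hcE : Continuous fun θ : ℝ => Complex.exp (Complex.I * θ) := by fun_prop
  -- the two integrand pieces
  set F1 : ℝ → ℂ := fun θ => Complex.exp (Complex.I * θ)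
      - (A + (starRingEnd ℂ) A * Complex.exp (2 * Complex.I * θ))
      - Complex.exp (Complex.I * θ) * (r θ : ℂ) with hF1def
  set F2 : ℝ → ℂ := fun θ => Complex.exp (Complex.I * θ) * ((g θ ^ 2 / f θ : ℝ) : ℂ) with hF2def
  -- pointwise decomposition
  have key : ∀ θ : ℝ, Complex.exp (Complex.I * θ)
        / ((c * (1 + 2 * (A * Complex.exp (-Complex.I * θ)).re + r θ) : ℝ) : ℂ)
      = (c:ℂ)⁻¹ * (F1 θ + F2 θ) := by
    intro θ
    have hfθ : ((f θ : ℝ) : ℂ) ≠ 0 := Complex.ofReal_ne_zero.mpr (hfne θ)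
    have e1 : Complex.exp (Complex.I * θ) * Complex.exp (-Complex.I * θ) = 1 := by
      rw [← Complex.exp_add]; norm_num
    have e2 : Complex.exp (Complex.I * θ) * Complex.exp (Complex.I * θ)
        = Complex.exp (2 * Complex.I * θ) := by
      rw [← Complex.exp_add]; ring_nf
    have hconjexp : (starRingEnd ℂ) (Complex.exp (-Complex.I * θ)) = Complex.exp (Complex.I * θ) := by
      rw [← Complex.exp_conj]
      congr 1
      simp [map_mul, Complex.conj_I, Complex.conj_ofReal]
    have hgC : ((g θ : ℝ) : ℂ)
        = A * Complex.exp (-Complex.I * θ) + (starRingEnd ℂ) A * Complex.exp (Complex.I * θ)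
          + (r θ : ℂ) := by
      have hz : ((2 * (A * Complex.exp (-Complex.I * θ)).re : ℝ) : ℂ)
          = A * Complex.exp (-Complex.I * θ)
            + (starRingEnd ℂ) (A * Complex.exp (-Complex.I * θ)) := by
        rw [Complex.add_conj]
      simp only [hgdef]
      push_cast
      rw [show ((2:ℂ) * ((A * Complex.exp (-Complex.I * θ)).re : ℂ))
          = ((2 * (A * Complex.exp (-Complex.I * θ)).re : ℝ) : ℂ) by push_cast; ring, hz,
        map_mul, hconjexp]
    have hEg : Complex.exp (Complex.I * θ) * ((g θ : ℝ) : ℂ)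
        = A + (starRingEnd ℂ) A * Complex.exp (2 * Complex.I * θ)
          + Complex.exp (Complex.I * θ) * (r θ : ℂ) := by
      rw [hgC]
      linear_combination A * e1 + (starRingEnd ℂ) A * e2
    have hcast : ((c * (1 + 2 * (A * Complex.exp (-Complex.I * θ)).re + r θ) : ℝ) : ℂ)
        = (c:ℂ) * ((f θ : ℝ) : ℂ) := by
      simp only [hfdef, hgdef]
      push_cast
      ring
    have hfC : ((f θ : ℝ) : ℂ) = 1 + ((g θ : ℝ) : ℂ) := by
      simp only [hfdef]; push_cast; ring
    rw [hcast, alg_id _ ((g θ : ℝ) : ℂ) _ _ hfC hfθ hcne]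
    simp only [hF1def, hF2def]
    rw [show ((g θ ^ 2 / f θ : ℝ) : ℂ) = ((g θ : ℝ) : ℂ)^2 / ((f θ : ℝ) : ℂ) by push_cast; ring]
    linear_combination (-(c:ℂ)⁻¹) * hEg
  -- integrability
  have hi1 : IntervalIntegrable F1 MeasureTheory.volume 0 (2*π) := by
    apply Continuous.intervalIntegrable
    simp only [hF1def]
    fun_prop
  have hcontq : Continuous fun θ => g θ ^ 2 / f θ := ((hcontg.pow 2).div hcontf hfne)
  have hi2 : IntervalIntegrable F2 MeasureTheory.volume 0 (2*π) := by
    apply Continuous.intervalIntegrable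
    simp only [hF2def]
    exact hcE.mul (Complex.continuous_ofReal.comp hcontq)
  -- from the constraint
  have hsum : (∫ θ in (0:ℝ)..(2*π), F1 θ) + (∫ θ in (0:ℝ)..(2*π), F2 θ) = 0 := by
    have h0 : (∫ θ in (0:ℝ)..(2*π), (c:ℂ)⁻¹ * (F1 θ + F2 θ)) = 0 := by
      rw [← hint]
      apply intervalIntegral.integral_congr
      intro θ _
      exact (key θ).symm
    rw [intervalIntegral.integral_const_mul, intervalIntegral.integral_add hi1 hi2] at h0
    rcases mul_eq_zero.mp h0 with h | h
    · exact absurd h (inv_ne_zero hcne)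
    · exact h
  -- compute ∫ F1
  have hir : IntervalIntegrable (fun θ : ℝ => Complex.exp (Complex.I * θ) * (r θ : ℂ))
      MeasureTheory.volume 0 (2*π) := by
    apply Continuous.intervalIntegrable
    fun_prop
  have hiconst : IntervalIntegrable (fun θ : ℝ =>
      A + (starRingEnd ℂ) A * Complex.exp (2 * Complex.I * θ)) MeasureTheory.volume 0 (2*π) := by
    apply Continuous.intervalIntegrable
    fun_prop
  have hiE : IntervalIntegrable (fun θ : ℝ => Complex.exp (Complex.I * θ))
      MeasureTheory.volume 0 (2*π) := hcE.intervalIntegrable _ _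
  have hI2 : (∫ θ in (0:ℝ)..(2*π),
      (A + (starRingEnd ℂ) A * Complex.exp (2 * Complex.I * θ))) = ((2*π : ℝ) : ℂ) * A := by
    rw [intervalIntegral.integral_add intervalIntegrable_const
        (by apply Continuous.intervalIntegrable; fun_prop),
      intervalIntegral.integral_const, intervalIntegral.integral_const_mul, int_exp_2I]
    simp [Complex.real_smul]
  have hF1val : (∫ θ in (0:ℝ)..(2*π), F1 θ)
      = -(((2*π : ℝ) : ℂ) * A) - ∫ θ in (0:ℝ)..(2*π), Complex.exp (Complex.I * θ) * (r θ : ℂ) := by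
    simp only [hF1def]
    rw [intervalIntegral.integral_sub (hiE.sub hiconst) hir,
      intervalIntegral.integral_sub hiE hiconst, int_exp_I, hI2]
    ring
  -- main identity: 2πA equals a small integral
  have hmain : ((2*π : ℝ) : ℂ) * A
      = ∫ θ in (0:ℝ)..(2*π), Complex.exp (Complex.I * θ) * ((g θ ^ 2 / f θ - r θ : ℝ) : ℂ) := by
    have : (∫ θ in (0:ℝ)..(2*π), F2 θ)
        - (∫ θ in (0:ℝ)..(2*π), Complex.exp (Complex.I * θ) * (r θ : ℂ))
        = ∫ θ in (0:ℝ)..(2*π), Complex.exp (Complex.I * θ) * ((g θ ^ 2 / f θ - r θ : ℝ) : ℂ) := by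
      rw [← intervalIntegral.integral_sub hi2 hir]
      apply intervalIntegral.integral_congr
      intro θ _
      simp only [hF2def]
      push_cast
      ring
    rw [← this]
    have := hF1val
    linear_combination hF1val - hsum
  -- bound the RHS
  set M : ℝ := (2*a + δ)^2 * (100/97) + δ with hMdef
  have hbound : ∀ θ ∈ Set.uIoc (0:ℝ) (2*π),
      ‖Complex.exp (Complex.I * θ) * ((g θ ^ 2 / f θ - r θ : ℝ) : ℂ)‖ ≤ M := by
    intro θ _
    rw [norm_mul, Complex.norm_exp, Complex.norm_real, Real.norm_eq_abs]
    have hsq : g θ ^ 2 ≤ (2*a + δ)^2 := by nlinarith [hgb θ, abs_nonneg (g θ), _root_.sq_abs (g θ)]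
    have hq : g θ ^ 2 / f θ ≤ (2*a + δ)^2 / (97/100) :=
      div_le_div₀ (by positivity) hsq (by norm_num) (hfb θ)
    have hq0 : 0 ≤ g θ ^ 2 / f θ := div_nonneg (sq_nonneg _) (hfpos θ).le
    have : |g θ ^ 2 / f θ - r θ| ≤ g θ ^ 2 / f θ + δ := by
      have := hrδ θ
      rw [abs_sub_comm]
      calc |r θ - g θ ^ 2 / f θ| ≤ |r θ| + |g θ ^ 2 / f θ| := abs_sub _ _
        _ ≤ δ + g θ ^ 2 / f θ := by rw [_root_.abs_of_nonneg hq0]; linarith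
        _ = g θ ^ 2 / f θ + δ := by ring
    have hre : (Complex.I * (θ:ℂ)).re = 0 := by simp
    rw [hre, Real.exp_zero, one_mul, hMdef]
    have h97 : (2*a + δ)^2 / (97/100) = (2*a + δ)^2 * (100/97) := by ring
    linarith [hq, this, h97 ▸ hq]
  have hnorm : ‖((2*π : ℝ) : ℂ) * A‖ ≤ M * |2*π - 0| := by
    rw [hmain]
    exact intervalIntegral.norm_integral_le_of_norm_le_const hbound
  have hpi : 0 < π := Real.pi_pos
  have hlhs : ‖((2*π : ℝ) : ℂ) * A‖ = 2*π * a := by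
    rw [norm_mul, Complex.norm_real, Real.norm_eq_abs, ha,
      abs_of_pos (by positivity)]
  have habs : |2*π - 0| = 2*π := by rw [sub_zero, abs_of_pos (by positivity)]
  rw [hlhs, habs] at hnorm
  have haM : a ≤ M := by
    have h2p : (0:ℝ) < 2*π := by positivity
    nlinarith [hnorm]
  have hsq' : (2*a + δ)^2 * (100/97) ≤ (3/97) * (2*a + δ) := by nlinarith [h3, ha0, hδ.le]
  rw [hMdef] at haM
  linarith
end
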